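/- Let n ≥ 1 and 2 ≤ i ≤ j ≤ n, and let σ be the cyclic permutation (i i+1 ⋯ j) of {1,…,n}, i.e. σ(k) = k+1 for i ≤ k < j, σ(j) = i, and σ(k) = k for all other k. If D ∈ Mₙ(ℂ) has a zero cross at index j, then 𝔯(U[σ]·D·U[σ]*) ≤ 𝔯(D) + 1. -/
import Mathlib


/-- `D` has a zero cross at index `k`: every entry in the `k`-th row and every entry
in the `k`-th column of `D` is `0`. -/
def hasZeroCross {n : ℕ} (D : Matrix (Fin n) (Fin n) ℂ) (k : Fin n) : Prop :=
  (∀ q : Fin n, D k q = 0) ∧ (∀ p : Fin n, D p k = 0)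

/-- The bandwidth `𝔯(D)` of a matrix: the least `m : ℕ` such that `D p q = 0`
whenever `|p - q| ≥ m`. -/
noncomputable def bandwidth {n : ℕ} (D : Matrix (Fin n) (Fin n) ℂ) : ℕ :=
  sInf {m : ℕ | ∀ p q : Fin n, m ≤ Nat.dist (p : ℕ) (q : ℕ) → D p q = 0}

/-- The permutation-type matrix `U[σ]` of a function `σ`, with `(p,q)`-entry equal
to `1` if `p = σ q` and `0` otherwise. -/
def permMatFun {n : ℕ} (σ : Fin n → Fin n) : Matrix (Fin n) (Fin n) ℂ :=
  Matrix.of fun p q => if p = σ q then 1 else 0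

lemma conj_entry {n : ℕ} (σ : Fin n → Fin n) (hbij : Function.Bijective σ)
    (D : Matrix (Fin n) (Fin n) ℂ) (p q : Fin n) :
    (permMatFun σ * D * star (permMatFun σ)) p q
      = D ((Equiv.ofBijective σ hbij).symm p) ((Equiv.ofBijective σ hbij).symm q) := by
  set e := Equiv.ofBijective σ hbij with he
  have hσe : ∀ x, σ x = e x := fun x => rfl
  simp only [Matrix.mul_apply, Matrix.star_apply, permMatFun, Matrix.of_apply]
  have h1 : ∀ x : Fin n, ∀ r : Fin n, (if p = σ x then (1:ℂ) else 0)
      = if x = e.symm p then 1 else 0 := by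
    intro x r
    congr 1
    simp [hσe, eq_comm, Equiv.eq_symm_apply]
  calc (∑ r, (∑ s, (if p = σ s then (1:ℂ) else 0) * D s r) * star (if q = σ r then (1:ℂ) else 0))
      = ∑ r, (∑ s, (if s = e.symm p then (1:ℂ) else 0) * D s r) *
          (if r = e.symm q then (1:ℂ) else 0) := by
        refine Finset.sum_congr rfl fun r _ => ?_
        congr 1
        · refine Finset.sum_congr rfl fun s _ => ?_
          congr 1
          simp [hσe, eq_comm, Equiv.eq_symm_apply]
        · rw [show (if q = σ r then (1:ℂ) else 0) = if r = e.symm q then 1 else 0 by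
            simp [hσe, eq_comm, Equiv.eq_symm_apply]]
          simp [apply_ite (star : ℂ → ℂ)]
    _ = D (e.symm p) (e.symm q) := by
        simp [ite_mul, mul_ite, Finset.sum_ite_eq']

theorem stmt_9 (n i j : ℕ) (hn : 1 ≤ n) (hi : 2 ≤ i) (hij : i ≤ j) (hjn : j ≤ n)
    (σ : Fin n → Fin n) (hbij : Function.Bijective σ)
    (hσ1 : ∀ k : Fin n, i ≤ (k : ℕ) + 1 → (k : ℕ) + 1 < j → (σ k : ℕ) = (k : ℕ) + 1)
    (hσ2 : (σ ⟨j - 1, by omega⟩ : ℕ) = i - 1)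
    (hσ3 : ∀ k : Fin n, ((k : ℕ) + 1 < i ∨ j < (k : ℕ) + 1) → σ k = k)
    (D : Matrix (Fin n) (Fin n) ℂ) (hD : hasZeroCross D ⟨j - 1, by omega⟩) :
    bandwidth (permMatFun σ * D * star (permMatFun σ)) ≤ bandwidth D + 1 := by
  set e := Equiv.ofBijective σ hbij with he
  -- the defining set for D is nonempty, so its infimum is a member
  have hne : {m : ℕ | ∀ p q : Fin n, m ≤ Nat.dist (p : ℕ) (q : ℕ) → D p q = 0}.Nonempty := by
    refine ⟨n, fun p q hpq => ?_⟩
    have := p.isLt; have := q.isLt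
    simp [Nat.dist] at hpq; omega
  have hm : ∀ p q : Fin n, bandwidth D ≤ Nat.dist (p : ℕ) (q : ℕ) → D p q = 0 :=
    Nat.sInf_mem hne
  -- key : σ moves each index other than j-1 by 0 or +1
  have key : ∀ k : Fin n, (k : ℕ) ≠ j - 1 → ((σ k : ℕ) = k ∨ (σ k : ℕ) = (k : ℕ) + 1) := by
    intro k hk
    by_cases h1 : (k : ℕ) + 1 < i
    · left; rw [hσ3 k (Or.inl h1)]
    by_cases h2 : j < (k : ℕ) + 1
    · left; rw [hσ3 k (Or.inr h2)]
    · right; exact hσ1 k (by omega) (by omega)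
  refine Nat.sInf_le ?_
  intro p q hpq
  rw [conj_entry σ hbij D p q]
  set a := (Equiv.ofBijective σ hbij).symm p with ha
  set b := (Equiv.ofBijective σ hbij).symm q with hb
  have hpa : (p : ℕ) = (σ a : ℕ) := by
    have : σ a = p := (Equiv.ofBijective σ hbij).apply_symm_apply p
    rw [this]
  have hqb : (q : ℕ) = (σ b : ℕ) := by
    have : σ b = q := (Equiv.ofBijective σ hbij).apply_symm_apply q
    rw [this]
  by_cases haj : (a : ℕ) = j - 1
  · have : a = ⟨j - 1, by omega⟩ := Fin.ext haj
    rw [this]; exact hD.1 b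
  by_cases hbj : (b : ℕ) = j - 1
  · have : b = ⟨j - 1, by omega⟩ := Fin.ext hbj
    rw [this]; exact hD.2 a
  · apply hm
    rcases key a haj with h | h <;> rcases key b hbj with h' | h' <;>
      · rw [hpa, hqb, h, h'] at hpq
        simp [Nat.dist] at hpq ⊢
        omega
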